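/- arXiv:0802.2901 — 2 statements merged into one kernel-verified Lean document; each statement's English description precedes it below -/
import Mathlib

section
/- For any real-valued smooth functions φ and ψ with compact support in ℝ², one has ‖φψ‖_{L²(ℝ²)}² ≤ ‖φ ∂₁φ‖_{L¹(ℝ²)} · ‖ψ ∂₂ψ‖_{L¹(ℝ²)}, where ∂₁ and ∂₂ denote the partial derivatives in the two coordinate directions. -/
/- STATEMENT 0: For real-valued smooth functions φ, ψ with compact support in ℝ²,
   ‖φψ‖_{L²(ℝ²)}² ≤ ‖φ ∂₁φ‖_{L¹(ℝ²)} · ‖ψ ∂₂ψ‖_{L¹(ℝ²)}. -/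

noncomputable section

open MeasureTheory Real


/-- 1-D key estimate: `g x ^ 2 ≤ ∫ |g g'|` for smooth compactly supported `g`. -/
lemma key1 (g : ℝ → ℝ) (hg : ContDiff ℝ (⊤ : ℕ∞) g) (hgc : HasCompactSupport g) (x : ℝ) :
    g x ^ 2 ≤ ∫ t, |g t * deriv g t| := by
  set h : ℝ → ℝ := fun t => g t ^ 2 with hh
  have hgd : Differentiable ℝ g := hg.differentiable (by simp)
  have hder : ∀ t, HasDerivAt h (2 * (g t * deriv g t)) t := by
    intro t
    have := ((hgd t).hasDerivAt.fun_pow 2)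
    simpa [pow_one, mul_comm, mul_assoc, mul_left_comm] using this
  have hgc' : HasCompactSupport (fun t => g t * deriv g t) := hgc.mul_right
  have hcont : Continuous fun t => g t * deriv g t :=
    hg.continuous.mul (hg.continuous_deriv (by simp))
  have hint : Integrable (fun t => |g t * deriv g t|) :=
    (hcont.abs).integrable_of_hasCompactSupport hgc'.abs
  have hhc : HasCompactSupport h := by
    have : HasCompactSupport (fun t => g t * g t) := hgc.mul_right
    simpa [hh, pow_two] using this
  -- find a bound R for the support of h
  obtain ⟨R, hR⟩ := (hhc.isCompact).isBounded.subset_closedBall 0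
  have hbp : (0:ℝ) ≤ |R| + |x| + 1 := by positivity
  set b : ℝ := |R| + |x| + 1 with hb
  set a : ℝ := -b with ha
  have hax : a ≤ x := by
    have h1 : -|x| ≤ x := neg_abs_le x
    have h2 : |x| ≤ b := by rw [hb]; nlinarith [abs_nonneg R]
    simp only [ha]; linarith
  have hxb : x ≤ b := by
    have h1 : x ≤ |x| := le_abs_self x
    rw [hb]; nlinarith [abs_nonneg R]
  have hza : h a = 0 := by
    apply image_eq_zero_of_notMem_tsupport
    intro hmem
    have h3 := hR hmem
    simp only [Metric.mem_closedBall, dist_zero_right, Real.norm_eq_abs, ha, hb] at h3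
    rw [abs_neg, abs_of_nonneg hbp] at h3
    nlinarith [abs_nonneg x, le_abs_self R]
  have hzb : h b = 0 := by
    apply image_eq_zero_of_notMem_tsupport
    intro hmem
    have h3 := hR hmem
    simp only [Metric.mem_closedBall, dist_zero_right, Real.norm_eq_abs, hb] at h3
    rw [abs_of_nonneg hbp] at h3
    nlinarith [abs_nonneg x, le_abs_self R]
  have hii : ∀ u v : ℝ, IntervalIntegrable (fun t => 2 * (g t * deriv g t)) volume u v :=
    fun u v => (continuous_const.mul hcont).intervalIntegrable u v
  have h1 : ∫ t in a..x, 2 * (g t * deriv g t) = h x - h a :=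
    intervalIntegral.integral_eq_sub_of_hasDerivAt (fun t _ => hder t) (hii a x)
  have h2 : ∫ t in x..b, 2 * (g t * deriv g t) = h b - h x :=
    intervalIntegral.integral_eq_sub_of_hasDerivAt (fun t _ => hder t) (hii x b)
  have e1 : h x = ∫ t in a..x, 2 * (g t * deriv g t) := by rw [h1, hza]; ring
  have e2 : h x = -∫ t in x..b, 2 * (g t * deriv g t) := by rw [h2, hzb]; ring
  have b1 : ∫ t in a..x, 2 * (g t * deriv g t) ≤ ∫ t in a..x, |2 * (g t * deriv g t)| :=
    (le_abs_self _).trans (intervalIntegral.abs_integral_le_integral_abs hax)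
  have b2 : -∫ t in x..b, 2 * (g t * deriv g t) ≤ ∫ t in x..b, |2 * (g t * deriv g t)| :=
    (neg_le_abs _).trans (intervalIntegral.abs_integral_le_integral_abs hxb)
  have hadd : (∫ t in a..x, |2 * (g t * deriv g t)|) + ∫ t in x..b, |2 * (g t * deriv g t)|
      = ∫ t in a..b, |2 * (g t * deriv g t)| :=
    intervalIntegral.integral_add_adjacent_intervals
      ((continuous_const.mul hcont).abs.intervalIntegrable a x)
      ((continuous_const.mul hcont).abs.intervalIntegrable x b)
  have hfin : ∫ t in a..b, |2 * (g t * deriv g t)| ≤ ∫ t, |2 * (g t * deriv g t)| := by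
    rw [intervalIntegral.integral_of_le (hax.trans hxb)]
    apply setIntegral_le_integral
    · exact ((continuous_const.mul hcont).abs).integrable_of_hasCompactSupport
        (hgc'.mul_left.abs)
    · exact Filter.Eventually.of_forall fun t => abs_nonneg _
  have habs : ∀ t : ℝ, |2 * (g t * deriv g t)| = 2 * |g t * deriv g t| := by
    intro t; rw [abs_mul]; norm_num
  have final : 2 * h x ≤ 2 * ∫ t, |g t * deriv g t| := by
    calc 2 * h x = (∫ t in a..x, 2 * (g t * deriv g t)) +
          (-∫ t in x..b, 2 * (g t * deriv g t)) := by rw [← e1, ← e2]; ring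
      _ ≤ (∫ t in a..x, |2 * (g t * deriv g t)|) + ∫ t in x..b, |2 * (g t * deriv g t)| :=
          add_le_add b1 b2
      _ = ∫ t in a..b, |2 * (g t * deriv g t)| := hadd
      _ ≤ ∫ t, |2 * (g t * deriv g t)| := hfin
      _ = 2 * ∫ t, |g t * deriv g t| := by
          simp_rw [habs]; exact integral_const_mul 2 _
  have := (mul_le_mul_iff_right₀ (by norm_num : (0:ℝ) < 2)).1 final
  simpa [hh] using this


open MeasureTheory Real

/-- The two coordinate directions of `ℝ²`. -/
def bdir : Fin 2 → ℝ × ℝ := ![(1, 0), (0, 1)]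

/-- `i`-th partial derivative. -/
def pd (i : Fin 2) (f : ℝ × ℝ → ℝ) (x : ℝ × ℝ) : ℝ :=
  fderiv ℝ f x (bdir i)

lemma pd_cont {i : Fin 2} {f : ℝ × ℝ → ℝ} (hf : ContDiff ℝ (⊤ : ℕ∞) f) : Continuous (pd i f) := by
  have h1 : Continuous (fderiv ℝ f) := hf.continuous_fderiv (by simp)
  exact h1.clm_apply continuous_const

lemma isom_right (y : ℝ) : Isometry (fun t : ℝ => (t, y)) :=
  Isometry.of_dist_eq fun a b => by
    simp [Prod.dist_eq, max_eq_left dist_nonneg]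

lemma isom_left (x : ℝ) : Isometry (fun s : ℝ => (x, s)) :=
  Isometry.of_dist_eq fun a b => by
    simp [Prod.dist_eq, max_eq_right dist_nonneg]

theorem product_L2_estimate (φ ψ : ℝ × ℝ → ℝ)
    (hφ : ContDiff ℝ (⊤ : ℕ∞) φ) (hφc : HasCompactSupport φ)
    (hψ : ContDiff ℝ (⊤ : ℕ∞) ψ) (hψc : HasCompactSupport ψ) :
    ∫ x, (φ x * ψ x) ^ 2 ≤
      (∫ x, |φ x * pd 0 φ x|) * (∫ x, |ψ x * pd 1 ψ x|) := by
  have hφd : Differentiable ℝ φ := hφ.differentiable (by simp)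
  have hψd : Differentiable ℝ ψ := hψ.differentiable (by simp)
  set A : ℝ × ℝ → ℝ := fun p => |φ p * pd 0 φ p| with hA
  set B : ℝ × ℝ → ℝ := fun p => |ψ p * pd 1 ψ p| with hB
  have hAc : Continuous A := (hφ.continuous.mul (pd_cont hφ)).abs
  have hBc : Continuous B := (hψ.continuous.mul (pd_cont hψ)).abs
  have hAcs : HasCompactSupport A := (hφc.mul_right).abs
  have hBcs : HasCompactSupport B := (hψc.mul_right).abs
  have hAi : Integrable A := hAc.integrable_of_hasCompactSupport hAcs
  have hBi : Integrable B := hBc.integrable_of_hasCompactSupport hBcs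
  set F : ℝ → ℝ := fun y => ∫ t, A (t, y) with hF
  set G : ℝ → ℝ := fun x => ∫ s, B (x, s) with hG
  -- sections of φ in the first variable
  have keyφ : ∀ x y : ℝ, φ (x, y) ^ 2 ≤ F y := by
    intro x y
    set g : ℝ → ℝ := fun t => φ (t, y) with hg
    have hline : ContDiff ℝ (⊤ : ℕ∞) (fun t : ℝ => (t, y)) := contDiff_id.prodMk contDiff_const
    have hgcd : ContDiff ℝ (⊤ : ℕ∞) g := hφ.comp hline
    have hgcs : HasCompactSupport g :=
      hφc.comp_isClosedEmbedding (isom_right y).isClosedEmbedding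
    have hd : ∀ t : ℝ, deriv g t = pd 0 φ (t, y) := by
      intro t
      have hl : HasDerivAt (fun t : ℝ => (t, y)) ((1 : ℝ), (0 : ℝ)) t :=
        (hasDerivAt_id t).prodMk (hasDerivAt_const t y)
      have hD : HasDerivAt g (fderiv ℝ φ (t, y) (1, 0)) t :=
        (hφd (t, y)).hasFDerivAt.comp_hasDerivAt t hl
      rw [hD.deriv]
      simp [pd, bdir]
    have := key1 g hgcd hgcs x
    simp only [hd] at this
    exact this
  have keyψ : ∀ x y : ℝ, ψ (x, y) ^ 2 ≤ G x := by
    intro x y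
    set g : ℝ → ℝ := fun s => ψ (x, s) with hg
    have hline : ContDiff ℝ (⊤ : ℕ∞) (fun s : ℝ => (x, s)) := contDiff_const.prodMk contDiff_id
    have hgcd : ContDiff ℝ (⊤ : ℕ∞) g := hψ.comp hline
    have hgcs : HasCompactSupport g :=
      hψc.comp_isClosedEmbedding (isom_left x).isClosedEmbedding
    have hd : ∀ s : ℝ, deriv g s = pd 1 ψ (x, s) := by
      intro s
      have hl : HasDerivAt (fun s : ℝ => (x, s)) ((0 : ℝ), (1 : ℝ)) s :=
        (hasDerivAt_const s x).prodMk (hasDerivAt_id s)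
      have hD : HasDerivAt g (fderiv ℝ ψ (x, s) (0, 1)) s :=
        (hψd (x, s)).hasFDerivAt.comp_hasDerivAt s hl
      rw [hD.deriv]
      simp [pd, bdir]
    have := key1 g hgcd hgcs y
    simp only [hd] at this
    exact this
  have hvol : (volume : Measure (ℝ × ℝ)) = (volume : Measure ℝ).prod volume :=
    Measure.volume_eq_prod ℝ ℝ
  have hAi' : Integrable A ((volume : Measure ℝ).prod volume) := hvol ▸ hAi
  have hBi' : Integrable B ((volume : Measure ℝ).prod volume) := hvol ▸ hBi
  have hFi : Integrable F := hAi'.integral_prod_right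
  have hGi : Integrable G := hBi'.integral_prod_left
  have hFnn : ∀ y, 0 ≤ F y := fun y => integral_nonneg fun t => abs_nonneg _
  have hGnn : ∀ x, 0 ≤ G x := fun x => integral_nonneg fun s => abs_nonneg _
  -- pointwise bound
  have hpt : ∀ p : ℝ × ℝ, (φ p * ψ p) ^ 2 ≤ G p.1 * F p.2 := by
    intro p
    have h1 : φ p ^ 2 ≤ F p.2 := keyφ p.1 p.2
    have h2 : ψ p ^ 2 ≤ G p.1 := keyψ p.1 p.2
    calc (φ p * ψ p) ^ 2 = ψ p ^ 2 * φ p ^ 2 := by ring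
      _ ≤ G p.1 * F p.2 := mul_le_mul h2 h1 (sq_nonneg _) (hGnn _)
  have hprodInt : Integrable (fun p : ℝ × ℝ => G p.1 * F p.2) := by
    rw [hvol]; exact hGi.mul_prod hFi
  have hLHSi : Integrable (fun p : ℝ × ℝ => (φ p * ψ p) ^ 2) := by
    apply Continuous.integrable_of_hasCompactSupport
    · exact ((hφ.continuous.mul hψ.continuous).pow 2)
    · have : HasCompactSupport (fun p => φ p * ψ p) := hφc.mul_right
      have h2 : HasCompactSupport (fun p => (φ p * ψ p) * (φ p * ψ p)) := this.mul_right
      simpa [pow_two] using h2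
  have main : ∫ p, (φ p * ψ p) ^ 2 ≤ ∫ p : ℝ × ℝ, G p.1 * F p.2 :=
    integral_mono hLHSi hprodInt hpt
  have split : ∫ p : ℝ × ℝ, G p.1 * F p.2 = (∫ x, G x) * ∫ y, F y := by
    rw [hvol]; exact integral_prod_mul G F
  have hAu : Integrable (Function.uncurry fun x y => A (x, y))
      ((volume : Measure ℝ).prod volume) := by
    simpa [Function.uncurry_def] using hAi'
  have hFint : (∫ y, F y) = ∫ p, A p := by
    rw [hvol, integral_prod A hAi',
      integral_integral_swap (f := fun x y => A (x, y)) hAu]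
  have hGint : (∫ x, G x) = ∫ p, B p := by
    rw [hvol, integral_prod B hBi']
  calc ∫ p, (φ p * ψ p) ^ 2 ≤ ∫ p : ℝ × ℝ, G p.1 * F p.2 := main
    _ = (∫ x, G x) * ∫ y, F y := split
    _ = (∫ p, B p) * ∫ p, A p := by rw [hFint, hGint]
    _ = (∫ p, A p) * ∫ p, B p := mul_comm _ _

end
end

section
/- (Ladyzhenskaya inequality in 2-D) For any real-valued smooth function φ with compact support in ℝ², one has ‖φ‖_{L⁴(ℝ²)}⁴ ≤ 2 ‖φ‖_{L²(ℝ²)}² · ‖∇φ‖_{L²(ℝ²;ℝ²)}². -/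
/- STATEMENT 1 (Ladyzhenskaya inequality in 2-D): for any real-valued smooth
   function φ with compact support in ℝ²,
   ‖φ‖_{L⁴(ℝ²)}⁴ ≤ 2 ‖φ‖_{L²(ℝ²)}² ‖∇φ‖_{L²(ℝ²;ℝ²)}². -/

noncomputable section

open MeasureTheory Real

/-- Cauchy–Schwarz inequality for integrals. -/
lemma integral_cauchy_schwarz {α : Type*} [MeasurableSpace α] {μ : Measure α}
    {f g : α → ℝ} (hf2 : Integrable (fun z => f z ^ 2) μ)
    (hg2 : Integrable (fun z => g z ^ 2) μ)
    (hfg : Integrable (fun z => f z * g z) μ) :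
    (∫ z, f z * g z ∂μ) ^ 2 ≤ (∫ z, f z ^ 2 ∂μ) * ∫ z, g z ^ 2 ∂μ := by
  set A := ∫ z, f z ^ 2 ∂μ
  set B := ∫ z, g z ^ 2 ∂μ
  set C := ∫ z, f z * g z ∂μ
  have key : ∀ t : ℝ, 0 ≤ A * (t * t) + (-2 * C) * t + B := by
    intro t
    have h0 : 0 ≤ ∫ z, (t * f z - g z) ^ 2 ∂μ :=
      integral_nonneg fun z => sq_nonneg _
    have he : ∫ z, (t * f z - g z) ^ 2 ∂μ
        = A * (t * t) + (-2 * C) * t + B := by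
      have e1 : (fun z => (t * f z - g z) ^ 2)
          = fun z => (t * t) * (f z ^ 2) - (2 * t) * (f z * g z) + g z ^ 2 := by
        funext z; ring
      have i1 : Integrable (fun z => (t * t) * (f z ^ 2)) μ := hf2.const_mul _
      have i2 : Integrable (fun z => (2 * t) * (f z * g z)) μ := hfg.const_mul _
      have i3 : Integrable (fun z => (t * t) * (f z ^ 2) - (2 * t) * (f z * g z)) μ :=
        i1.sub i2
      rw [e1, integral_add i3 hg2, integral_sub i1 i2,
        MeasureTheory.integral_const_mul, MeasureTheory.integral_const_mul]
      ring
    linarith [he ▸ h0]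
  have hd := discrim_le_zero key
  rw [discrim] at hd
  nlinarith [hd]

/-- For a continuous linear functional on `ℝ × ℝ` (with the sup norm), the sum of the
absolute values of its two partial coefficients is at most its operator norm. -/
lemma abs_add_abs_le_opNorm (L : ℝ × ℝ →L[ℝ] ℝ) :
    |L (1, 0)| + |L (0, 1)| ≤ ‖L‖ := by
  set s : ℝ := if 0 ≤ L (1, 0) then 1 else -1 with hs
  set t : ℝ := if 0 ≤ L (0, 1) then 1 else -1 with ht
  have habs_s : |s| = 1 := by rw [hs]; split_ifs <;> simp
  have habs_t : |t| = 1 := by rw [ht]; split_ifs <;> simp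
  have hnorm : ‖((s, t) : ℝ × ℝ)‖ = 1 := by
    rw [Prod.norm_def]
    simp [Real.norm_eq_abs, habs_s, habs_t]
  have hval : L (s, t) = |L (1, 0)| + |L (0, 1)| := by
    have hdecomp : ((s, t) : ℝ × ℝ) = s • ((1 : ℝ), (0 : ℝ)) + t • ((0 : ℝ), (1 : ℝ)) := by
      simp [Prod.ext_iff]
    have e1 : s * L (1, 0) = |L (1, 0)| := by
      rw [hs]
      rcases le_or_gt 0 (L (1, 0)) with h | h
      · rw [if_pos h, one_mul, abs_of_nonneg h]
      · rw [if_neg (not_le.mpr h), abs_of_neg h]; ring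
    have e2 : t * L (0, 1) = |L (0, 1)| := by
      rw [ht]
      rcases le_or_gt 0 (L (0, 1)) with h | h
      · rw [if_pos h, one_mul, abs_of_nonneg h]
      · rw [if_neg (not_le.mpr h), abs_of_neg h]; ring
    rw [hdecomp, map_add, L.map_smul, L.map_smul, smul_eq_mul, smul_eq_mul, e1, e2]
  calc |L (1, 0)| + |L (0, 1)| = L (s, t) := hval.symm
    _ ≤ ‖L (s, t)‖ := le_abs_self _
    _ ≤ ‖L‖ * ‖((s, t) : ℝ × ℝ)‖ := L.le_opNorm _
    _ = ‖L‖ := by rw [hnorm, mul_one]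

/-- Final elementary algebra step. -/
lemma ladyzhenskaya_algebra {c1 c2 p a1 a2 q : ℝ} (hc1 : 0 ≤ c1) (hc2 : 0 ≤ c2)
    (hp : 0 ≤ p) (h1 : c1 ^ 2 ≤ p * a1) (h2 : c2 ^ 2 ≤ p * a2) (hq : a1 + a2 ≤ q) :
    (2 * c2) * (2 * c1) ≤ 2 * p * q := by
  nlinarith [sq_nonneg (c1 - c2), mul_le_mul_of_nonneg_left hq hp]

set_option maxHeartbeats 1000000 in
theorem ladyzhenskaya_2d (φ : ℝ × ℝ → ℝ)
    (hφ : ContDiff ℝ (⊤ : ℕ∞) φ) (hφc : HasCompactSupport φ) :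
    ∫ x, (φ x) ^ 4 ≤ 2 * (∫ x, (φ x) ^ 2) * (∫ x, ‖fderiv ℝ φ x‖ ^ 2) := by
  set D : ℝ × ℝ → (ℝ × ℝ →L[ℝ] ℝ) := fderiv ℝ φ with hDdef
  have hφcont : Continuous φ := hφ.continuous
  have hDcont : Continuous D := hφ.continuous_fderiv (by simp)
  have hDc : HasCompactSupport D := hφc.fderiv ℝ
  set p1 : ℝ × ℝ → ℝ := fun z => D z (1, 0) with hp1def
  set p2 : ℝ × ℝ → ℝ := fun z => D z (0, 1) with hp2def
  have hp1cont : Continuous p1 := hDcont.clm_apply continuous_const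
  have hp2cont : Continuous p2 := hDcont.clm_apply continuous_const
  -- the big compact set outside which everything vanishes
  set K0 : Set (ℝ × ℝ) := tsupport φ ∪ tsupport D with hK0def
  have hK0 : IsCompact K0 := hφc.union hDc
  have hv : ∀ z : ℝ × ℝ, z ∉ K0 → φ z = 0 ∧ D z = 0 := by
    intro z hz
    rw [hK0def, Set.mem_union] at hz
    push_neg at hz
    exact ⟨image_eq_zero_of_notMem_tsupport hz.1, image_eq_zero_of_notMem_tsupport hz.2⟩
  -- integrability of everything in sight
  have hint4 : Integrable (fun z : ℝ × ℝ => φ z ^ 4) := by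
    refine (hφcont.pow 4).integrable_of_hasCompactSupport ?_
    exact HasCompactSupport.intro hK0 fun z hz => by simp [(hv z hz).1]
  have hint2 : Integrable (fun z : ℝ × ℝ => φ z ^ 2) := by
    refine (hφcont.pow 2).integrable_of_hasCompactSupport ?_
    exact HasCompactSupport.intro hK0 fun z hz => by simp [(hv z hz).1]
  have hintD : Integrable (fun z : ℝ × ℝ => ‖D z‖ ^ 2) := by
    refine (hDcont.norm.pow 2).integrable_of_hasCompactSupport ?_
    exact HasCompactSupport.intro hK0 fun z hz => by simp [(hv z hz).2]
  have hintp1 : Integrable (fun z : ℝ × ℝ => p1 z ^ 2) := by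
    refine (hp1cont.pow 2).integrable_of_hasCompactSupport ?_
    exact HasCompactSupport.intro hK0 fun z hz => by simp [hp1def, (hv z hz).2]
  have hintp2 : Integrable (fun z : ℝ × ℝ => p2 z ^ 2) := by
    refine (hp2cont.pow 2).integrable_of_hasCompactSupport ?_
    exact HasCompactSupport.intro hK0 fun z hz => by simp [hp2def, (hv z hz).2]
  have hintfp1 : Integrable (fun z : ℝ × ℝ => |φ z| * |p1 z|) := by
    refine (hφcont.abs.mul hp1cont.abs).integrable_of_hasCompactSupport ?_
    exact HasCompactSupport.intro hK0 fun z hz => by simp [(hv z hz).1]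
  have hintfp2 : Integrable (fun z : ℝ × ℝ => |φ z| * |p2 z|) := by
    refine (hφcont.abs.mul hp2cont.abs).integrable_of_hasCompactSupport ?_
    exact HasCompactSupport.intro hK0 fun z hz => by simp [(hv z hz).1]
  -- the two slice functions
  set H1 : ℝ × ℝ → ℝ := fun z => 2 * |φ z| * |p1 z| with hH1def
  set H2 : ℝ × ℝ → ℝ := fun z => 2 * |φ z| * |p2 z| with hH2def
  have hH1i : Integrable H1 := by
    simp only [hH1def, mul_assoc]; exact hintfp1.const_mul 2
  have hH2i : Integrable H2 := by
    simp only [hH2def, mul_assoc]; exact hintfp2.const_mul 2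
  have hH1ip : Integrable H1 ((volume : Measure ℝ).prod volume) := by
    rwa [← Measure.volume_eq_prod]
  have hH2ip : Integrable H2 ((volume : Measure ℝ).prod volume) := by
    rwa [← Measure.volume_eq_prod]
  set F : ℝ → ℝ := fun y => ∫ t, H1 (t, y) with hFdef
  set G : ℝ → ℝ := fun x => ∫ s, H2 (x, s) with hGdef
  have hFi : Integrable F := hH1ip.integral_prod_right
  have hGi : Integrable G := hH2ip.integral_prod_left
  -- pointwise bound : φ (x, y) ^ 2 ≤ F y
  have hFbound : ∀ x y : ℝ, φ (x, y) ^ 2 ≤ F y := by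
    intro x y
    have hK1 : IsCompact (Prod.fst '' tsupport φ) := hφc.image continuous_fst
    have hsl0 : ∀ t : ℝ, t ∉ Prod.fst '' tsupport φ → φ (t, y) = 0 := by
      intro t ht
      by_contra h
      exact ht ⟨(t, y), subset_tsupport φ (by simpa [Function.mem_support] using h), rfl⟩
    set gy : ℝ → ℝ := fun t => φ (t, y) with hgydef
    have hgyC : ContDiff ℝ (⊤ : ℕ∞) gy := hφ.comp (contDiff_id.prodMk contDiff_const)
    have hgysq : ContDiff ℝ 1 (fun t => gy t ^ 2) := (hgyC.pow 2).of_le (by simp)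
    have hder : ∀ t : ℝ, HasDerivAt (fun t => gy t ^ 2) (2 * gy t * p1 (t, y)) t := by
      intro t
      have hline : HasDerivAt (fun t : ℝ => ((t, y) : ℝ × ℝ)) (1, 0) t :=
        (hasDerivAt_id t).prodMk (hasDerivAt_const t y)
      have hFd : HasFDerivAt φ (D (t, y)) (t, y) :=
        (hφ.differentiable (by simp) (t, y)).hasFDerivAt
      have h1 : HasDerivAt (φ ∘ fun t : ℝ => ((t, y) : ℝ × ℝ)) (D (t, y) (1, 0)) t :=
        HasFDerivAt.comp_hasDerivAt (f := fun t : ℝ => ((t, y) : ℝ × ℝ)) t hFd hline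
      simpa [hgydef, hp1def, Function.comp] using h1.fun_pow 2
    have hderiv_eq : deriv (fun t => gy t ^ 2) = fun t => 2 * gy t * p1 (t, y) :=
      funext fun t => (hder t).deriv
    have hcs_gy2 : HasCompactSupport (fun t => gy t ^ 2) :=
      HasCompactSupport.intro hK1 fun t ht => by simp [hgydef, hsl0 t ht]
    have hdGcont : Continuous fun t => 2 * gy t * p1 (t, y) := by
      have hlinec : Continuous fun t : ℝ => ((t, y) : ℝ × ℝ) :=
        continuous_id.prodMk continuous_const
      exact (continuous_const.mul (hφcont.comp hlinec)).mul (hp1cont.comp hlinec)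
    have hdGc : HasCompactSupport fun t => 2 * gy t * p1 (t, y) :=
      HasCompactSupport.intro hK1 fun t ht => by simp [hgydef, hsl0 t ht]
    have hdGi : Integrable (fun t => 2 * gy t * p1 (t, y)) :=
      hdGcont.integrable_of_hasCompactSupport hdGc
    calc φ (x, y) ^ 2
        = ∫ t in Set.Iic x, deriv (fun t => gy t ^ 2) t :=
          (HasCompactSupport.integral_Iic_deriv_eq hgysq hcs_gy2 x).symm
      _ = ∫ t in Set.Iic x, 2 * gy t * p1 (t, y) := by rw [hderiv_eq]
      _ ≤ |∫ t in Set.Iic x, 2 * gy t * p1 (t, y)| := le_abs_self _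
      _ ≤ ∫ t in Set.Iic x, 2 * |gy t| * |p1 (t, y)| := by
          simpa [Real.norm_eq_abs, abs_mul] using
            norm_integral_le_integral_norm (μ := volume.restrict (Set.Iic x))
              (fun t => 2 * gy t * p1 (t, y))
      _ ≤ ∫ t, 2 * |gy t| * |p1 (t, y)| := by
          have hdGi' : Integrable (fun t => 2 * |gy t| * |p1 (t, y)|) := by
            have := hdGi.abs
            simpa [abs_mul] using this
          exact setIntegral_le_integral hdGi'
            (Filter.Eventually.of_forall fun t =>
              mul_nonneg (mul_nonneg (by norm_num) (abs_nonneg _)) (abs_nonneg _))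
      _ = ∫ t, H1 (t, y) := rfl
      _ = F y := rfl
  -- pointwise bound : φ (x, y) ^ 2 ≤ G x
  have hGbound : ∀ x y : ℝ, φ (x, y) ^ 2 ≤ G x := by
    intro x y
    have hK2 : IsCompact (Prod.snd '' tsupport φ) := hφc.image continuous_snd
    have hsl0 : ∀ s : ℝ, s ∉ Prod.snd '' tsupport φ → φ (x, s) = 0 := by
      intro s hs
      by_contra h
      exact hs ⟨(x, s), subset_tsupport φ (by simpa [Function.mem_support] using h), rfl⟩
    set gx : ℝ → ℝ := fun s => φ (x, s) with hgxdef
    have hgxC : ContDiff ℝ (⊤ : ℕ∞) gx := hφ.comp (contDiff_const.prodMk contDiff_id)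
    have hgxsq : ContDiff ℝ 1 (fun s => gx s ^ 2) := (hgxC.pow 2).of_le (by simp)
    have hder : ∀ s : ℝ, HasDerivAt (fun s => gx s ^ 2) (2 * gx s * p2 (x, s)) s := by
      intro s
      have hline : HasDerivAt (fun s : ℝ => ((x, s) : ℝ × ℝ)) (0, 1) s :=
        (hasDerivAt_const s x).prodMk (hasDerivAt_id s)
      have hFd : HasFDerivAt φ (D (x, s)) (x, s) :=
        (hφ.differentiable (by simp) (x, s)).hasFDerivAt
      have h1 : HasDerivAt (φ ∘ fun s : ℝ => ((x, s) : ℝ × ℝ)) (D (x, s) (0, 1)) s :=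
        HasFDerivAt.comp_hasDerivAt (f := fun s : ℝ => ((x, s) : ℝ × ℝ)) s hFd hline
      simpa [hgxdef, hp2def, Function.comp] using h1.fun_pow 2
    have hderiv_eq : deriv (fun s => gx s ^ 2) = fun s => 2 * gx s * p2 (x, s) :=
      funext fun s => (hder s).deriv
    have hcs_gx2 : HasCompactSupport (fun s => gx s ^ 2) :=
      HasCompactSupport.intro hK2 fun s hs => by simp [hgxdef, hsl0 s hs]
    have hdGcont : Continuous fun s => 2 * gx s * p2 (x, s) := by
      have hlinec : Continuous fun s : ℝ => ((x, s) : ℝ × ℝ) :=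
        continuous_const.prodMk continuous_id
      exact (continuous_const.mul (hφcont.comp hlinec)).mul (hp2cont.comp hlinec)
    have hdGc : HasCompactSupport fun s => 2 * gx s * p2 (x, s) :=
      HasCompactSupport.intro hK2 fun s hs => by simp [hgxdef, hsl0 s hs]
    have hdGi : Integrable (fun s => 2 * gx s * p2 (x, s)) :=
      hdGcont.integrable_of_hasCompactSupport hdGc
    calc φ (x, y) ^ 2
        = ∫ s in Set.Iic y, deriv (fun s => gx s ^ 2) s :=
          (HasCompactSupport.integral_Iic_deriv_eq hgxsq hcs_gx2 y).symm
      _ = ∫ s in Set.Iic y, 2 * gx s * p2 (x, s) := by rw [hderiv_eq]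
      _ ≤ |∫ s in Set.Iic y, 2 * gx s * p2 (x, s)| := le_abs_self _
      _ ≤ ∫ s in Set.Iic y, 2 * |gx s| * |p2 (x, s)| := by
          simpa [Real.norm_eq_abs, abs_mul] using
            norm_integral_le_integral_norm (μ := volume.restrict (Set.Iic y))
              (fun s => 2 * gx s * p2 (x, s))
      _ ≤ ∫ s, 2 * |gx s| * |p2 (x, s)| := by
          have hdGi' : Integrable (fun s => 2 * |gx s| * |p2 (x, s)|) := by
            have := hdGi.abs
            simpa [abs_mul] using this
          exact setIntegral_le_integral hdGi'
            (Filter.Eventually.of_forall fun s =>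
              mul_nonneg (mul_nonneg (by norm_num) (abs_nonneg _)) (abs_nonneg _))
      _ = ∫ s, H2 (x, s) := rfl
      _ = G x := rfl
  -- pointwise product bound
  have hpt : ∀ z : ℝ × ℝ, φ z ^ 4 ≤ G z.1 * F z.2 := by
    intro z
    have h1 : φ z ^ 2 ≤ G z.1 := by simpa using hGbound z.1 z.2
    have h2 : φ z ^ 2 ≤ F z.2 := by simpa using hFbound z.1 z.2
    have h3 : (0 : ℝ) ≤ φ z ^ 2 := sq_nonneg _
    calc φ z ^ 4 = φ z ^ 2 * φ z ^ 2 := by ring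
      _ ≤ G z.1 * F z.2 := mul_le_mul h1 h2 h3 (le_trans h3 h1)
  have hGFi : Integrable (fun z : ℝ × ℝ => G z.1 * F z.2) := by
    rw [Measure.volume_eq_prod]
    exact hGi.mul_prod hFi
  -- main chain
  have hstep1 : ∫ z : ℝ × ℝ, φ z ^ 4 ≤ (∫ x : ℝ, G x) * ∫ y : ℝ, F y := by
    calc ∫ z : ℝ × ℝ, φ z ^ 4 ≤ ∫ z : ℝ × ℝ, G z.1 * F z.2 :=
          integral_mono hint4 hGFi hpt
      _ = (∫ x : ℝ, G x) * ∫ y : ℝ, F y := by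
          rw [Measure.volume_eq_prod]; exact integral_prod_mul G F
  -- Fubini for the two slice integrals
  have hFtot : ∫ y : ℝ, F y = 2 * ∫ z : ℝ × ℝ, |φ z| * |p1 z| := by
    have h1 := integral_prod_symm H1 hH1ip
    rw [← Measure.volume_eq_prod] at h1
    calc ∫ y : ℝ, F y = ∫ z : ℝ × ℝ, H1 z := h1.symm
      _ = 2 * ∫ z : ℝ × ℝ, |φ z| * |p1 z| := by
          simp only [hH1def, mul_assoc]
          exact integral_const_mul 2 _
  have hGtot : ∫ x : ℝ, G x = 2 * ∫ z : ℝ × ℝ, |φ z| * |p2 z| := by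
    have h1 := integral_prod H2 hH2ip
    rw [← Measure.volume_eq_prod] at h1
    calc ∫ x : ℝ, G x = ∫ z : ℝ × ℝ, H2 z := h1.symm
      _ = 2 * ∫ z : ℝ × ℝ, |φ z| * |p2 z| := by
          simp only [hH2def, mul_assoc]
          exact integral_const_mul 2 _
  -- Cauchy–Schwarz bounds
  have habs2 : Integrable (fun z : ℝ × ℝ => |φ z| ^ 2) := by simpa [sq_abs] using hint2
  have hC1 : (∫ z : ℝ × ℝ, |φ z| * |p1 z|) ^ 2
      ≤ (∫ z : ℝ × ℝ, φ z ^ 2) * ∫ z : ℝ × ℝ, p1 z ^ 2 := by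
    have h := integral_cauchy_schwarz (f := fun z : ℝ × ℝ => |φ z|)
      (g := fun z => |p1 z|) habs2 (by simpa [sq_abs] using hintp1) hintfp1
    simpa [sq_abs] using h
  have hC2 : (∫ z : ℝ × ℝ, |φ z| * |p2 z|) ^ 2
      ≤ (∫ z : ℝ × ℝ, φ z ^ 2) * ∫ z : ℝ × ℝ, p2 z ^ 2 := by
    have h := integral_cauchy_schwarz (f := fun z : ℝ × ℝ => |φ z|)
      (g := fun z => |p2 z|) habs2 (by simpa [sq_abs] using hintp2) hintfp2
    simpa [sq_abs] using h
  -- sum of squared partials bounded by squared operator norm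
  have hsum : (∫ z : ℝ × ℝ, p1 z ^ 2) + ∫ z : ℝ × ℝ, p2 z ^ 2
      ≤ ∫ z : ℝ × ℝ, ‖D z‖ ^ 2 := by
    rw [← integral_add hintp1 hintp2]
    refine integral_mono (hintp1.add hintp2) hintD fun z => ?_
    have h := abs_add_abs_le_opNorm (D z)
    simp only [hp1def, hp2def]
    nlinarith [abs_nonneg (D z (1, 0)), abs_nonneg (D z (0, 1)),
      mul_nonneg (abs_nonneg (D z (1, 0))) (abs_nonneg (D z (0, 1))),
      sq_abs (D z (1, 0)), sq_abs (D z (0, 1))]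
  -- final algebra
  have hC1nn : 0 ≤ ∫ z : ℝ × ℝ, |φ z| * |p1 z| :=
    integral_nonneg fun z => mul_nonneg (abs_nonneg _) (abs_nonneg _)
  have hC2nn : 0 ≤ ∫ z : ℝ × ℝ, |φ z| * |p2 z| :=
    integral_nonneg fun z => mul_nonneg (abs_nonneg _) (abs_nonneg _)
  have hPnn : 0 ≤ ∫ z : ℝ × ℝ, φ z ^ 2 := integral_nonneg fun z => sq_nonneg _
  set C1 := ∫ z : ℝ × ℝ, |φ z| * |p1 z|
  set C2 := ∫ z : ℝ × ℝ, |φ z| * |p2 z|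
  set P := ∫ z : ℝ × ℝ, φ z ^ 2
  set A1 := ∫ z : ℝ × ℝ, p1 z ^ 2
  set A2 := ∫ z : ℝ × ℝ, p2 z ^ 2
  set Q := ∫ z : ℝ × ℝ, ‖D z‖ ^ 2
  have hfinal : (2 * C2) * (2 * C1) ≤ 2 * P * Q :=
    ladyzhenskaya_algebra hC1nn hC2nn hPnn hC1 hC2 hsum
  calc ∫ z : ℝ × ℝ, φ z ^ 4 ≤ (∫ x : ℝ, G x) * ∫ y : ℝ, F y := hstep1
    _ = (2 * C2) * (2 * C1) := by rw [hFtot, hGtot]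
    _ ≤ 2 * P * Q := hfinal

end
end
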